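/- In a symmetric monoidal category C satisfying the Causality axiom, let {ρ_x : I ⟶ A}_{x∈X} be a family of pairwise distinct states indexed by a set X with at least two elements. If the states {ρ_x}_{x∈X} are distinguishable, then there exists an object E and a gate C : A ⟶ A ⊗ E that generates faithful side information for {ρ_x}_{x∈X}. -/

import Mathlib

open CategoryTheory CategoryTheory.Limits MonoidalCategory

universe v u

variable {C : Type u} [Category.{v} C] [MonoidalCategory C]

/-- A family of states `ρ : X → (𝟙_ C ⟶ A)` of an object `A` is (perfectly)
distinguishable iff for every pair of objects `B, B'` and every indexed family of
gates `G : X → (B ⟶ B')` there is a gate `W : A ⊗ B ⟶ B'` such that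
`(λ_ B).inv ≫ (ρ x ⊗ 𝟙 B) ≫ W = G x` for every `x`. -/
def Distinguishable {X : Type} {A : C} (ρ : X → (𝟙_ C ⟶ A)) : Prop :=
  ∀ (B B' : C) (G : X → (B ⟶ B')),
    ∃ W : A ⊗ B ⟶ B', ∀ x : X, (λ_ B).inv ≫ (ρ x ⊗ₘ 𝟙 B) ≫ W = G x

/-- A gate `c : A ⟶ A ⊗ E` generates faithful side information for the states
`ρ : X → (𝟙_ C ⟶ A)` iff there is a family of pairwise distinct states
`η : X → (𝟙_ C ⟶ E)` with `ρ x ≫ c = (λ_ (𝟙_ C)).inv ≫ (ρ x ⊗ η x)` for every `x`. -/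
def GeneratesFaithfulSideInfo {X : Type} {A E : C}
    (ρ : X → (𝟙_ C ⟶ A)) (c : A ⟶ A ⊗ E) : Prop :=
  ∃ η : X → (𝟙_ C ⟶ E),
    (∀ x : X, ρ x ≫ c = (λ_ (𝟙_ C)).inv ≫ (ρ x ⊗ₘ η x)) ∧ Function.Injective η

theorem Distinguishable.exists_comp_eq {X : Type} {A B : C} {ρ : X → (𝟙_ C ⟶ A)}
    (h : Distinguishable ρ) (σ : X → (𝟙_ C ⟶ B)) : ∃ W : A ⟶ B, ∀ x, ρ x ≫ W = σ x := by
  obtain ⟨W, hW⟩ := h (𝟙_ C) B σ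
  refine ⟨(ρ_ A).inv ≫ W, fun x => ?_⟩
  rw [← hW x, ← Category.assoc, rightUnitor_inv_naturality, unitors_inv_equal, Category.assoc,
    tensorHom_id]

theorem exists_faithful_side_info_of_distinguishable_general
    {X : Type} {A : C} (ρ : X → (𝟙_ C ⟶ A))
    (hdistinct : Function.Injective ρ)
    (hdist : Distinguishable ρ) :
    ∃ (E : C) (c : A ⟶ A ⊗ E), GeneratesFaithfulSideInfo ρ c := by
  -- Distinguishability lets a single gate clone every ρ x; the copy is faithful side information.
  obtain ⟨c, hc⟩ := hdist.exists_comp_eq fun x => (λ_ (𝟙_ C)).inv ≫ (ρ x ⊗ₘ ρ x)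
  exact ⟨A, c, ρ, hc, hdistinct⟩

/-- If a family of pairwise distinct states (at least two of them) is
distinguishable, then there is a gate generating faithful side information for it. -/
theorem exists_faithful_side_info_of_distinguishable [SymmetricCategory C]
    (hCaus : IsTerminal (𝟙_ C))
    {X : Type} [Nontrivial X] {A : C} (ρ : X → (𝟙_ C ⟶ A))
    (hdistinct : Function.Injective ρ)
    (hdist : Distinguishable ρ) :
    ∃ (E : C) (c : A ⟶ A ⊗ E), GeneratesFaithfulSideInfo ρ c :=
  exists_faithful_side_info_of_distinguishable_general ρ hdistinct hdist
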